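/- arXiv:1112.0582 — 7 statements merged into one kernel-verified Lean document; each statement's English description precedes it below -/
import Mathlib

section
/- Let w ∈ ℕ and let π : ℤ → ℤ be a bijection with |π(i) − i| ≤ w for all i ∈ ℤ. Then the window count n(j*) := #{ i ∈ ℤ : j* − w ≤ i ≤ j* + w − 1 and π(i) ≥ j* } is independent of j*: for all j₁, j₂ ∈ ℤ one has n(j₁) = n(j₂). -/
/-!
Sliding the window from `j` to `j + 1` removes the index `j + w` and the index `π⁻¹ j` from the
set `{i ∈ [j - w, j + w] | π i ≥ j}`, and bandwidth `w` guarantees that both lie in it, so the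
count does not change.
-/

open Finset

noncomputable def windowCount (π : ℤ ≃ ℤ) (w : ℕ) (j : ℤ) : ℕ :=
  ((Icc (j - w) (j + w - 1)).filter (fun i => j ≤ π i)).card

lemma Int.filter_Icc_sub_one_right_eq_erase (p : ℤ → Prop) [DecidablePred p] (a b : ℤ) :
    (Icc a (b - 1)).filter p = ((Icc a b).filter p).erase b := by
  rw [← filter_erase, Icc_erase_right, Icc_sub_one_right_eq_Ico]

section Bandwidth

variable {π : ℤ ≃ ℤ} {w : ℕ}

lemma filter_window_succ_eq_erase_symm (hupper : ∀ i, π i - i ≤ w) (j : ℤ) :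
    (Icc (j + 1 - w) (j + 1 + w - 1)).filter (fun i => j + 1 ≤ π i) =
      ((Icc (j - w) (j + w)).filter (fun i => j ≤ π i)).erase (π.symm j) := by
  ext i
  have hi := hupper i
  have hne : i ≠ π.symm j ↔ π i ≠ j := π.eq_symm_apply.not
  simp only [mem_erase, mem_filter, mem_Icc, hne]
  omega

lemma windowCount_add_one (hband : ∀ i, |π i - i| ≤ w) (j : ℤ) :
    windowCount π w (j + 1) = windowCount π w j := by
  have hlower (i : ℤ) : -(w : ℤ) ≤ π i - i := (abs_le.mp (hband i)).1
  have hupper (i : ℤ) : π i - i ≤ w := (abs_le.mp (hband i)).2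
  have hright : j + w ∈ (Icc (j - w) (j + w)).filter (fun i => j ≤ π i) := by
    have := hlower (j + w)
    simp only [mem_filter, mem_Icc]
    omega
  have hsymm : π.symm j ∈ (Icc (j - w) (j + w)).filter (fun i => j ≤ π i) := by
    have h₁ := hlower (π.symm j)
    have h₂ := hupper (π.symm j)
    rw [π.apply_symm_apply] at h₁ h₂
    simp only [mem_filter, mem_Icc, π.apply_symm_apply]
    omega
  rw [windowCount, windowCount, filter_window_succ_eq_erase_symm hupper,
    Int.filter_Icc_sub_one_right_eq_erase, card_erase_of_mem hright, card_erase_of_mem hsymm]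

lemma windowCount_eq_windowCount_zero (hband : ∀ i, |π i - i| ≤ w) (j : ℤ) :
    windowCount π w j = windowCount π w 0 := by
  have hperiodic : Function.Periodic (windowCount π w) 1 := windowCount_add_one hband
  simpa using hperiodic.int_mul_eq j

end Bandwidth

/-- For a bijection `π : ℤ → ℤ` of bandwidth at most `w`, the window count
`n(j*) = #{ i : j* - w ≤ i ≤ j* + w - 1, π(i) ≥ j* }` is independent of `j*`. -/
theorem window_count_independent (w : ℕ) (π : ℤ ≃ ℤ)
    (hband : ∀ i : ℤ, |π i - i| ≤ (w : ℤ)) (j₁ j₂ : ℤ) :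
    ((Finset.Icc (j₁ - w) (j₁ + w - 1)).filter (fun i => j₁ ≤ π i)).card =
    ((Finset.Icc (j₂ - w) (j₂ + w - 1)).filter (fun i => j₂ ≤ π i)).card :=
  (windowCount_eq_windowCount_zero hband j₁).trans
    (windowCount_eq_windowCount_zero hband j₂).symm
end

section
/- Let w ∈ ℕ, let π : ℤ → ℤ be a bijection with |π(i) − i| ≤ w for all i, and let P be its permutation operator on ℓ²(ℤ). Then the operator B := Q P Q + (I − Q) is Fredholm, and for every j* ∈ ℤ its index equals n − w, where n = #{ i ∈ ℤ : j* − w ≤ i ≤ j* + w − 1 and π(i) ≥ j* }. (Thus the plus-index of P is computable from any 2w consecutive rows of its matrix.) -/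
/-!
The kernel of `B` consists of the vectors supported on `{j ≥ 1 : π⁻¹ j ≤ 0}` and its range is the
set of vectors vanishing on `{i ≥ 1 : π i ≤ 0}`, a closed subspace of finite codimension. Hence `B`
is Fredholm, and its index is the net number of indices that `π` carries across the cut between
`0` and `1`. This net flux is the same for every cut `j`: inside a finite interval it equals
`#{i < j} - #{i : π i < j}`, and moving the cut from `j` to `j'` adds `j' - j` to both terms. For a
permutation of bandwidth `w`, every crossing of the cut `j` happens in the `2w` rows
`j - w, …, j + w - 1`, where the flux is `n - w`.
-/

noncomputable section

/-- `ℓ²(ℤ)`, the Hilbert space of square-summable complex sequences indexed by `ℤ`. -/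
abbrev H : Type := lp (fun _ : ℤ => ℂ) 2

/-- A bounded operator on a Hilbert space is Fredholm if its kernel is finite-dimensional
and its range is closed and of finite codimension. -/
def IsFredholm (T : H →L[ℂ] H) : Prop :=
  FiniteDimensional ℂ (LinearMap.ker (T : H →ₗ[ℂ] H)) ∧
  IsClosed (LinearMap.range (T : H →ₗ[ℂ] H) : Set H) ∧
  FiniteDimensional ℂ (H ⧸ LinearMap.range (T : H →ₗ[ℂ] H))

/-- The Fredholm index `ind(T) = dim ker T − dim coker T`. -/
def fredholmIndex (T : H →L[ℂ] H) : ℤ :=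
  (Module.finrank ℂ (LinearMap.ker (T : H →ₗ[ℂ] H)) : ℤ) -
  (Module.finrank ℂ (H ⧸ LinearMap.range (T : H →ₗ[ℂ] H)) : ℤ)

open scoped ENNReal
open Finset

theorem Memℓp.comp_equiv {α β E : Type*} [NormedAddCommGroup E] {p : ℝ≥0∞} {f : α → E}
    (hf : Memℓp f p) (e : β ≃ α) : Memℓp (f ∘ e) p := by
  obtain (rfl | rfl | hp) := p.trichotomy
  · rw [memℓp_zero_iff] at hf ⊢
    exact hf.preimage e.injective.injOn
  · rw [memℓp_infty_iff] at hf ⊢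
    exact hf.mono (Set.range_comp_subset_range e (‖f ·‖))
  · rw [memℓp_gen_iff hp] at hf ⊢
    exact e.summable_iff.2 hf

namespace lp

variable {ι 𝕜 : Type*} [NormedField 𝕜] {p : ℝ≥0∞}

def extendByZero [DecidableEq ι] (s : Finset ι) : (s → 𝕜) →ₗ[𝕜] lp (fun _ : ι => 𝕜) p where
  toFun c := ⟨fun i => if h : i ∈ s then c ⟨i, h⟩ else 0,
    (memℓp_zero (s.finite_toSet.subset fun i hi => by_contra fun h => hi (dif_neg h)))
      |>.of_exponent_ge zero_le⟩
  map_add' c d := by ext i; show _ = (_ : 𝕜) + _; by_cases h : i ∈ s <;> simp [h]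
  map_smul' a c := by ext i; by_cases h : i ∈ s <;> simp [h]

theorem extendByZero_apply [DecidableEq ι] (s : Finset ι) (c : s → 𝕜) (i : ι) :
    extendByZero (p := p) s c i = if h : i ∈ s then c ⟨i, h⟩ else 0 := rfl

variable [Fact (1 ≤ p)]

variable (𝕜 p) in
def restrict (s : Finset ι) : lp (fun _ : ι => 𝕜) p →L[𝕜] (s → 𝕜) :=
  ContinuousLinearMap.pi fun i => evalCLM 𝕜 (fun _ : ι => 𝕜) p i

theorem restrict_apply (s : Finset ι) (x : lp (fun _ : ι => 𝕜) p) (i : s) :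
    restrict 𝕜 p s x i = x i := rfl

theorem mem_ker_restrict {s : Finset ι} {x : lp (fun _ : ι => 𝕜) p} :
    x ∈ LinearMap.ker (restrict 𝕜 p s : lp (fun _ : ι => 𝕜) p →ₗ[𝕜] (s → 𝕜)) ↔
      ∀ i ∈ s, x i = 0 := by
  simp [funext_iff, restrict_apply]

theorem restrict_extendByZero [DecidableEq ι] (s : Finset ι) (c : s → 𝕜) :
    restrict 𝕜 p s (extendByZero s c) = c := by
  ext i; simp [restrict_apply, extendByZero_apply]

theorem mem_range_extendByZero [DecidableEq ι] {s : Finset ι} {x : lp (fun _ : ι => 𝕜) p} :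
    x ∈ LinearMap.range (extendByZero (p := p) s) ↔ ∀ i ∉ s, x i = 0 := by
  constructor
  · rintro ⟨c, rfl⟩ i hi
    simp [extendByZero_apply, hi]
  · intro hx
    refine ⟨restrict 𝕜 p s x, lp.ext (funext fun i => ?_)⟩
    by_cases hi : i ∈ s
    · simp [extendByZero_apply, restrict_apply, hi]
    · simp [extendByZero_apply, hi, hx i hi]

end lp

theorem isFredholm_and_fredholmIndex_eq {T : H →L[ℂ] H} (K Z : Finset ℤ)
    (hker : LinearMap.ker (T : H →ₗ[ℂ] H) = LinearMap.range (lp.extendByZero (p := 2) K))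
    (hrange : LinearMap.range (T : H →ₗ[ℂ] H) =
      LinearMap.ker (lp.restrict ℂ 2 Z : H →ₗ[ℂ] (Z → ℂ))) :
    IsFredholm T ∧ fredholmIndex T = #K - #Z := by
  have hsurj : Function.Surjective (lp.restrict ℂ 2 Z) :=
    fun c => ⟨_, lp.restrict_extendByZero Z c⟩
  have hinj : Function.Injective (lp.extendByZero (𝕜 := ℂ) (p := 2) K) :=
    Function.LeftInverse.injective (lp.restrict_extendByZero (p := 2) K)
  let coker : (H ⧸ LinearMap.range (T : H →ₗ[ℂ] H)) ≃ₗ[ℂ] (Z → ℂ) :=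
    (Submodule.quotEquivOfEq _ _ hrange).trans
      ((lp.restrict ℂ 2 Z : H →ₗ[ℂ] (Z → ℂ)).quotKerEquivOfSurjective hsurj)
  refine ⟨⟨?_, ?_, coker.symm.finiteDimensional⟩, ?_⟩
  · rw [hker]; infer_instance
  · rw [hrange]; exact (lp.restrict ℂ 2 Z).isClosed_ker
  · rw [fredholmIndex, coker.finrank_eq, hker, LinearMap.finrank_range_of_inj hinj]
    simp

section Compression

variable {π : ℤ ≃ ℤ} {P Q : H →L[ℂ] H}
  (hP : ∀ (x : H) (i : ℤ), P x i = x (π i))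
  (hQ : ∀ (x : H) (i : ℤ), Q x i = if 1 ≤ i then x i else 0)
include hP hQ

theorem compression_apply (x : H) (i : ℤ) :
    (Q ∘L P ∘L Q + (1 - Q)) x i = if 1 ≤ i then (if 1 ≤ π i then x (π i) else 0) else x i := by
  by_cases hi : 1 ≤ i <;> simp [hP, hQ, hi]

theorem ker_compression {K : Finset ℤ} (hK : ∀ j, j ∈ K ↔ π.symm j < 1 ∧ 1 ≤ j) :
    LinearMap.ker ((Q ∘L P ∘L Q + (1 - Q) : H →L[ℂ] H) : H →ₗ[ℂ] H) =
      LinearMap.range (lp.extendByZero (p := 2) K) := by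
  ext x
  rw [LinearMap.mem_ker, ContinuousLinearMap.coe_coe, lp.mem_range_extendByZero]
  constructor
  · intro hx j hj
    have hBx (i : ℤ) := congr_arg (fun y : H => y i) hx
    simp only [compression_apply hP hQ, lp.coeFn_zero, Pi.zero_apply] at hBx
    by_cases h1 : 1 ≤ j
    · have h2 : 1 ≤ π.symm j := by simpa [hK, h1] using hj
      simpa [h1, h2] using hBx (π.symm j)
    · simpa [h1] using hBx j
  · intro hx
    refine lp.ext (funext fun i => ?_)
    rw [compression_apply hP hQ]
    split_ifs with h1 h2
    · exact hx _ (by simp [hK, h1])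
    · rfl
    · exact hx _ (by simp [hK, h1])

theorem range_compression {Z : Finset ℤ} (hZ : ∀ i, i ∈ Z ↔ 1 ≤ i ∧ π i < 1) :
    LinearMap.range ((Q ∘L P ∘L Q + (1 - Q) : H →L[ℂ] H) : H →ₗ[ℂ] H) =
      LinearMap.ker (lp.restrict ℂ 2 Z : H →ₗ[ℂ] (Z → ℂ)) := by
  ext y
  rw [lp.mem_ker_restrict]
  constructor
  · rintro ⟨x, rfl⟩ i hi
    rw [hZ] at hi
    rw [ContinuousLinearMap.coe_coe, compression_apply hP hQ, if_pos hi.1, if_neg (not_le.2 hi.2)]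
  · intro hy
    -- `z` undoes `P` on the rows `i ≥ 1` with `π i ≥ 1`; on the rows of `Z` both sides vanish.
    let z : H := ⟨(Q y : ℤ → ℂ) ∘ π.symm, (lp.memℓp (Q y)).comp_equiv π.symm⟩
    refine ⟨Q z + (y - Q y), ?_⟩
    refine lp.ext (funext fun i => ?_)
    rw [ContinuousLinearMap.coe_coe, compression_apply hP hQ]
    by_cases h1 : 1 ≤ i
    · by_cases h2 : 1 ≤ π i
      · simp [hQ, h1, h2, z]
      · simp [h1, h2, hy i ((hZ i).2 ⟨h1, not_le.1 h2⟩)]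
    · simp [hQ, h1]

end Compression

section Crossings

def upCrossings (f : ℤ → ℤ) (s : Finset ℤ) (j : ℤ) : Finset ℤ := s.filter fun i => i < j ∧ j ≤ f i

def downCrossings (f : ℤ → ℤ) (s : Finset ℤ) (j : ℤ) : Finset ℤ :=
  s.filter fun i => j ≤ i ∧ f i < j

def netCrossing (f : ℤ → ℤ) (s : Finset ℤ) (j : ℤ) : ℤ :=
  #(upCrossings f s j) - #(downCrossings f s j)

def window (w : ℕ) (j : ℤ) : Finset ℤ := Icc (j - w) (j + w - 1)

variable {f : ℤ → ℤ} {w : ℕ}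

theorem netCrossing_eq_card_sub_card (s : Finset ℤ) (j : ℤ) :
    netCrossing f s j = #(s.filter (· < j)) - #(s.filter (f · < j)) := by
  have h₁ := card_filter_add_card_filter_not (s := s.filter (· < j)) (j ≤ f ·)
  have h₂ := card_filter_add_card_filter_not (s := s.filter (f · < j)) (j ≤ ·)
  simp only [filter_filter, not_le] at h₁ h₂
  rw [filter_congr fun i _ => and_comm (a := f i < j) (b := i < j)] at h₂
  rw [filter_congr fun i _ => and_comm (a := f i < j) (b := j ≤ i)] at h₂
  rw [netCrossing, upCrossings, downCrossings]
  omega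

theorem card_filter_window_sub (j : ℤ) :
    (#((window w j).filter (j ≤ f ·)) : ℤ) - w = netCrossing f (window w j) j := by
  have hsplit := card_filter_add_card_filter_not (s := window w j) (j ≤ f ·)
  have hbelow : (window w j).filter (· < j) = Icc (j - w) (j - 1) := by
    ext i; simp only [window, mem_filter, mem_Icc]; omega
  have hcard : #(window w j) = 2 * w := by rw [window, Int.card_Icc]; omega
  simp only [not_le] at hsplit
  rw [netCrossing_eq_card_sub_card, hbelow, Int.card_Icc]
  omega

section Banded

variable (hband : ∀ i, |f i - i| ≤ w)
include hband

theorem mem_upCrossings_window {i j : ℤ} :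
    i ∈ upCrossings f (window w j) j ↔ i < j ∧ j ≤ f i := by
  have := abs_le.1 (hband i)
  simp only [upCrossings, window, mem_filter, mem_Icc]
  omega

theorem mem_downCrossings_window {i j : ℤ} :
    i ∈ downCrossings f (window w j) j ↔ j ≤ i ∧ f i < j := by
  have := abs_le.1 (hband i)
  simp only [downCrossings, window, mem_filter, mem_Icc]
  omega

theorem netCrossing_eq_netCrossing_window {s : Finset ℤ} {j : ℤ} (hs : window w j ⊆ s) :
    netCrossing f s j = netCrossing f (window w j) j := by
  have hup : upCrossings f s j = upCrossings f (window w j) j := by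
    ext i
    rw [mem_upCrossings_window hband, upCrossings, mem_filter]
    exact ⟨And.right, fun h => ⟨hs ((mem_upCrossings_window hband).2 h |> mem_filter.1).1, h⟩⟩
  have hdown : downCrossings f s j = downCrossings f (window w j) j := by
    ext i
    rw [mem_downCrossings_window hband, downCrossings, mem_filter]
    exact ⟨And.right, fun h => ⟨hs ((mem_downCrossings_window hband).2 h |> mem_filter.1).1, h⟩⟩
  rw [netCrossing, hup, hdown, netCrossing]

end Banded

theorem card_filter_lt_eq_add (e : ℤ ≃ ℤ) (s : Finset ℤ) {j j' : ℤ} (hjj' : j ≤ j')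
    (hs : ∀ k ∈ Ico j j', e.symm k ∈ s) :
    (#(s.filter (e · < j')) : ℤ) = #(s.filter (e · < j)) + (j' - j) := by
  have hsplit : s.filter (e · < j') = s.filter (e · < j) ∪ (Ico j j').map e.symm.toEmbedding := by
    ext i
    simp only [mem_union, mem_filter, mem_map_equiv, Equiv.symm_symm, mem_Ico]
    constructor
    · rintro ⟨hi, hlt⟩
      by_cases h : e i < j
      · exact Or.inl ⟨hi, h⟩
      · exact Or.inr ⟨not_lt.1 h, hlt⟩
    · rintro (⟨hi, h⟩ | h)
      · exact ⟨hi, h.trans_le hjj'⟩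
      · exact ⟨by simpa using hs (e i) (mem_Ico.2 h), h.2⟩
  have hdisj : Disjoint (s.filter (e · < j)) ((Ico j j').map e.symm.toEmbedding) := by
    rw [disjoint_left]
    intro i hi hi'
    simp only [mem_filter, mem_map_equiv, Equiv.symm_symm, mem_Ico] at hi hi'
    exact absurd hi.2 (not_lt.2 hi'.1)
  rw [hsplit, card_union_of_disjoint hdisj, card_map, Int.card_Ico]
  omega

theorem netCrossing_window_eq_of_le {π : ℤ ≃ ℤ} (hband : ∀ i, |π i - i| ≤ w) {j j' : ℤ}
    (hjj' : j ≤ j') : netCrossing π (window w j) j = netCrossing π (window w j') j' := by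
  set s := Icc (j - w) (j' + w - 1)
  have hs : window w j ⊆ s ∧ window w j' ⊆ s := by
    constructor <;> intro i <;> simp only [window, s, mem_Icc] <;> omega
  have hIco : ∀ k ∈ Ico j j', k ∈ s ∧ π.symm k ∈ s := by
    intro k hk
    have := abs_le.1 (hband (π.symm k))
    simp only [mem_Ico] at hk
    simp only [s, Equiv.apply_symm_apply, mem_Icc] at this ⊢
    omega
  have hid : (#(s.filter (· < j')) : ℤ) = #(s.filter (· < j)) + (j' - j) :=
    card_filter_lt_eq_add (Equiv.refl ℤ) s hjj' fun k hk => (hIco k hk).1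
  have hπ := card_filter_lt_eq_add π s hjj' fun k hk => (hIco k hk).2
  rw [← netCrossing_eq_netCrossing_window hband hs.1,
    ← netCrossing_eq_netCrossing_window hband hs.2, netCrossing_eq_card_sub_card,
    netCrossing_eq_card_sub_card]
  omega

theorem netCrossing_window_eq {π : ℤ ≃ ℤ} (hband : ∀ i, |π i - i| ≤ w) (j j' : ℤ) :
    netCrossing π (window w j) j = netCrossing π (window w j') j' := by
  rcases le_total j j' with h | h
  · exact netCrossing_window_eq_of_le hband h
  · exact (netCrossing_window_eq_of_le hband h).symm

end Crossings

/-- **Theorem 1.** For a banded permutation `π` of `ℤ` with bandwidth `w`,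
the compression `B = Q P Q + (I − Q)` is Fredholm and its index equals `n − w`,
where `n` is the number of `i ∈ [j* − w, j* + w − 1]` with `π(i) ≥ j*`,
for every choice of `j*`. -/
theorem plus_index_eq_window_count (w : ℕ) (π : ℤ ≃ ℤ)
    (hband : ∀ i : ℤ, |π i - i| ≤ (w : ℤ))
    (P Q : H →L[ℂ] H)
    (hP : ∀ (x : H) (i : ℤ), P x i = x (π i))
    (hQ : ∀ (x : H) (i : ℤ), Q x i = if 1 ≤ i then x i else 0) :
    IsFredholm (Q ∘L P ∘L Q + (1 - Q)) ∧
    ∀ jstar : ℤ,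
      fredholmIndex (Q ∘L P ∘L Q + (1 - Q)) =
        (((Finset.Icc (jstar - w) (jstar + w - 1)).filter
            (fun i => jstar ≤ π i)).card : ℤ) - w := by
  set K := (upCrossings π (window w 1) 1).map π.toEmbedding
  set Z := downCrossings π (window w 1) 1
  have hK (j : ℤ) : j ∈ K ↔ π.symm j < 1 ∧ 1 ≤ j := by
    rw [mem_map_equiv, mem_upCrossings_window hband, Equiv.apply_symm_apply]
  have hZ (i : ℤ) : i ∈ Z ↔ 1 ≤ i ∧ π i < 1 := mem_downCrossings_window hband
  obtain ⟨hfredholm, hindex⟩ :=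
    isFredholm_and_fredholmIndex_eq K Z (ker_compression hP hQ hK) (range_compression hP hQ hZ)
  refine ⟨hfredholm, fun jstar => ?_⟩
  rw [hindex, card_map, ← netCrossing, netCrossing_window_eq hband 1 jstar,
    ← card_filter_window_sub]
  rfl
end
end

section
/- Let π : ℤ → ℤ be a bijection (not necessarily of finite bandwidth) and suppose there exist i*, j* ∈ ℤ such that { π(i) : i < i* } = { j ∈ ℤ : j < j* }. Let P be the permutation operator of π on ℓ²(ℤ). Then B := Q P Q + (I − Q) is Fredholm and ind(B) = j* − i*. -/
/-!
Write `L = (-∞, 0]` and `D = π⁻¹ L \ L`. The operator `B = QPQ + (I - Q)` vanishes on the finite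
set `D` and elsewhere acts by `x ↦ x ∘ σ`, where `σ` is the identity on `L` and `π` off `L`;
`σ` is injective off `D`. So `ker B` is the space of sequences supported on the finite set
`ℤ \ σ(ℤ \ D) = π(L \ π⁻¹ L)`, and `ran B` is the closed space of sequences vanishing on `D`,
of codimension `|D|`. The index `|L \ π⁻¹ L| - |π⁻¹ L \ L|` is the relative index of `L` and
`π⁻¹ L`, which is additive; the splitting `π⁻¹ (-∞, j*) = (-∞, i*)` makes it
`(1 - i*) + (j* - 1)`.
-/

noncomputable section

open Set Function
open scoped symmDiff

section Memℓp

variable {α β E : Type*} [NormedAddCommGroup E] {p : ENNReal}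

theorem Memℓp.comp_injective {f : α → E} (hf : Memℓp f p) {g : β → α} (hg : Injective g) :
    Memℓp (f ∘ g) p := by
  obtain (rfl | rfl | hp) := p.trichotomy
  · rw [memℓp_zero_iff] at hf ⊢
    exact hf.preimage hg.injOn
  · rw [memℓp_infty_iff] at hf ⊢
    exact hf.mono (range_comp_subset_range g fun a => ‖f a‖)
  · rw [memℓp_gen_iff hp] at hf ⊢
    exact hf.comp_injective hg

theorem Function.comp_extend_zero {γ δ : Type*} [Zero γ] [Zero δ] {F : γ → δ} (hF : F 0 = 0)
    (f : β → γ) (g : β → α) : F ∘ extend g f 0 = extend g (F ∘ f) 0 := by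
  funext a
  rw [comp_apply, apply_extend F]
  congr 1
  exact funext fun _ => hF

theorem Memℓp.extend_zero {f : β → E} (hf : Memℓp f p) {g : β → α} (hg : Injective g) :
    Memℓp (extend g f 0) p := by
  obtain (rfl | rfl | hp) := p.trichotomy
  · rw [memℓp_zero_iff] at hf ⊢
    exact (hf.image g).subset support_extend_zero_subset
  · rw [memℓp_infty_iff] at hf ⊢
    rw [← Function.comp_def, comp_extend_zero norm_zero]
    refine ((hf.union (bddAbove_singleton (a := 0))).mono ?_)
    refine (range_extend_subset _ _ _).trans (union_subset_union_right _ ?_)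
    rintro _ ⟨_, _, rfl⟩
    rfl
  · rw [memℓp_gen_iff hp] at hf ⊢
    rw [← Function.comp_def (fun x : E => ‖x‖ ^ p.toReal),
      comp_extend_zero (by simp [Real.zero_rpow hp.ne']), summable_extend_zero hg]
    exact hf

end Memℓp

def restrictTo (s : Set ℤ) : H →ₗ[ℂ] (s → ℂ) where
  toFun x i := x i
  map_add' _ _ := rfl
  map_smul' _ _ := rfl

def vanishingOn (s : Set ℤ) : Submodule ℂ H := LinearMap.ker (restrictTo s)

theorem mem_vanishingOn {s : Set ℤ} {x : H} : x ∈ vanishingOn s ↔ ∀ i ∈ s, x i = 0 := by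
  rw [vanishingOn, LinearMap.mem_ker, funext_iff]
  exact Subtype.forall

theorem isClosed_vanishingOn (s : Set ℤ) : IsClosed (vanishingOn s : Set H) := by
  have : (vanishingOn s : Set H) = ⋂ i ∈ s, (fun x : H => x i) ⁻¹' {0} := by
    ext x; simp [mem_vanishingOn]
  rw [this]
  exact isClosed_biInter fun i _ =>
    isClosed_singleton.preimage (lp.lipschitzWith_one_eval 2 i).continuous

section FiniteSupport

variable (s : Set ℤ) [Finite s]

def extendByZero (f : s → ℂ) : H :=
  ⟨extend Subtype.val f 0, (Memℓp.all f).extend_zero Subtype.val_injective⟩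

theorem restrictTo_extendByZero (f : s → ℂ) : restrictTo s (extendByZero s f) = f :=
  funext fun i => Subtype.val_injective.extend_apply f 0 i

theorem extendByZero_mem_vanishingOn_compl (f : s → ℂ) : extendByZero s f ∈ vanishingOn sᶜ :=
  mem_vanishingOn.2 fun i hi =>
    extend_apply' (f := Subtype.val) f 0 i fun ⟨j, hj⟩ => hi (hj ▸ j.2)

def vanishingOnComplEquiv : vanishingOn sᶜ ≃ₗ[ℂ] (s → ℂ) :=
  LinearEquiv.ofBijective ((restrictTo s).domRestrict _)
    ⟨by
      rintro ⟨x, hx⟩ ⟨y, hy⟩ hxy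
      rw [mem_vanishingOn] at hx hy
      refine Subtype.ext (lp.ext (funext fun i => ?_))
      by_cases hi : i ∈ s
      · exact congr_fun hxy ⟨i, hi⟩
      · rw [hx i hi, hy i hi],
    fun f => ⟨⟨_, extendByZero_mem_vanishingOn_compl s f⟩, restrictTo_extendByZero s f⟩⟩

def quotientVanishingOnEquiv : (H ⧸ vanishingOn s) ≃ₗ[ℂ] (s → ℂ) :=
  (restrictTo s).quotKerEquivOfSurjective fun f => ⟨_, restrictTo_extendByZero s f⟩

theorem finrank_fun_eq_ncard : Module.finrank ℂ (s → ℂ) = s.ncard := by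
  have := Fintype.ofFinite s
  rw [Module.finrank_fintype_fun_eq_card, ← Nat.card_eq_fintype_card, Nat.card_coe_set_eq]

instance : FiniteDimensional ℂ (vanishingOn sᶜ) :=
  Module.Finite.equiv (vanishingOnComplEquiv s).symm

instance : FiniteDimensional ℂ (H ⧸ vanishingOn s) :=
  Module.Finite.equiv (quotientVanishingOnEquiv s).symm

theorem finrank_vanishingOn_compl : Module.finrank ℂ (vanishingOn sᶜ) = s.ncard := by
  rw [(vanishingOnComplEquiv s).finrank_eq, finrank_fun_eq_ncard]

theorem finrank_quotient_vanishingOn : Module.finrank ℂ (H ⧸ vanishingOn s) = s.ncard := by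
  rw [(quotientVanishingOnEquiv s).finrank_eq, finrank_fun_eq_ncard]

end FiniteSupport

section ReindexingOperator

variable {T : H →L[ℂ] H} {D : Set ℤ} {σ : ℤ → ℤ}

theorem ker_eq_vanishingOn (hT : ∀ x : H, ⇑(T x) = Dᶜ.indicator (x ∘ σ)) :
    LinearMap.ker (T : H →ₗ[ℂ] H) = vanishingOn (σ '' Dᶜ) := by
  ext x
  simp only [LinearMap.mem_ker, ContinuousLinearMap.coe_coe, mem_vanishingOn,
    forall_mem_image, lp.ext_iff, hT, lp.coeFn_zero, funext_iff, Pi.zero_apply,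
    indicator_apply_eq_zero, comp_apply]

theorem range_eq_vanishingOn (hT : ∀ x : H, ⇑(T x) = Dᶜ.indicator (x ∘ σ))
    (hσ : InjOn σ Dᶜ) : LinearMap.range (T : H →ₗ[ℂ] H) = vanishingOn D := by
  ext y
  simp only [LinearMap.mem_range, ContinuousLinearMap.coe_coe, mem_vanishingOn]
  constructor
  · rintro ⟨x, rfl⟩ i hi
    rw [hT, indicator_of_notMem (notMem_compl_iff.2 hi)]
  · intro hy
    let e : (Dᶜ : Set ℤ) → ℤ := fun i => σ i
    have he : Injective e := hσ.injective
    let x : H := ⟨extend e (fun i => y i) 0,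
      ((lp.memℓp y).comp_injective Subtype.val_injective).extend_zero he⟩
    refine ⟨x, lp.ext (funext fun i => ?_)⟩
    rw [hT]
    by_cases hi : i ∈ D
    · rw [indicator_of_notMem (notMem_compl_iff.2 hi), hy i hi]
    · rw [indicator_of_mem hi]
      exact he.extend_apply (fun i => y i) 0 ⟨i, hi⟩

theorem isFredholm_of_eq_indicator_comp (hT : ∀ x : H, ⇑(T x) = Dᶜ.indicator (x ∘ σ))
    (hσ : InjOn σ Dᶜ) (hD : D.Finite) (hK : (σ '' Dᶜ)ᶜ.Finite) : IsFredholm T := by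
  have := hD.to_subtype
  have := hK.to_subtype
  refine ⟨?_, ?_, ?_⟩
  · rw [ker_eq_vanishingOn hT, ← compl_compl (σ '' Dᶜ)]
    infer_instance
  · rw [range_eq_vanishingOn hT hσ]
    exact isClosed_vanishingOn D
  · rw [range_eq_vanishingOn hT hσ]
    infer_instance

theorem fredholmIndex_of_eq_indicator_comp (hT : ∀ x : H, ⇑(T x) = Dᶜ.indicator (x ∘ σ))
    (hσ : InjOn σ Dᶜ) (hD : D.Finite) (hK : (σ '' Dᶜ)ᶜ.Finite) :
    fredholmIndex T = (σ '' Dᶜ)ᶜ.ncard - D.ncard := by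
  have := hD.to_subtype
  have := hK.to_subtype
  rw [fredholmIndex, ker_eq_vanishingOn hT, range_eq_vanishingOn hT hσ, ← compl_compl (σ '' Dᶜ),
    finrank_vanishingOn_compl, finrank_quotient_vanishingOn, compl_compl]

end ReindexingOperator

/-- Meaningful only when `X ∆ Y` is finite: `Set.ncard` is `0` on infinite sets. -/
def relIndex {α : Type*} (X Y : Set α) : ℤ := (X \ Y).ncard - (Y \ X).ncard

section RelIndex

variable {α β : Type*} {X Y Z T : Set α}

theorem relIndex_eq_ncard_inter_sub (hT : T.Finite) (hXY : X ∆ Y ⊆ T) :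
    relIndex X Y = (X ∩ T).ncard - (Y ∩ T).ncard := by
  have hdiff : ∀ {U V : Set α}, U \ V ⊆ T → U \ V = (U ∩ T) \ (V ∩ T) := fun h => by
    ext a
    have := @h a
    simp only [mem_sdiff, mem_inter_iff] at this ⊢
    tauto
  have h₁ := ncard_inter_add_ncard_sdiff_eq_ncard (X ∩ T) (Y ∩ T) (hT.inter_of_right X)
  have h₂ := ncard_inter_add_ncard_sdiff_eq_ncard (Y ∩ T) (X ∩ T) (hT.inter_of_right Y)
  rw [inter_comm (Y ∩ T)] at h₂
  rw [relIndex, hdiff (subset_union_left.trans hXY), hdiff (subset_union_right.trans hXY)]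
  omega

theorem relIndex_add (hXY : (X ∆ Y).Finite) (hYZ : (Y ∆ Z).Finite) :
    relIndex X Y + relIndex Y Z = relIndex X Z := by
  have hT := hXY.union hYZ
  rw [relIndex_eq_ncard_inter_sub hT subset_union_left,
    relIndex_eq_ncard_inter_sub hT subset_union_right,
    relIndex_eq_ncard_inter_sub hT (symmDiff_triangle X Y Z)]
  ring

theorem relIndex_preimage (e : α ≃ β) (X Y : Set β) :
    relIndex (e ⁻¹' X) (e ⁻¹' Y) = relIndex X Y := by
  simp only [relIndex, ← preimage_sdiff, ncard_preimage_of_injective_subset_range e.injective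
    (by simp [e.surjective.range_eq])]

theorem relIndex_Iio (a b : ℤ) : relIndex (Iio a) (Iio b) = a - b := by
  simp only [relIndex, Iio_sdiff_Iio, ← Finset.coe_Ico, ncard_coe_finset, Int.card_Ico]
  omega

theorem finite_symmDiff_Iio {γ : Type*} [LinearOrder γ] [LocallyFiniteOrder γ] (a b : γ) :
    (Iio a ∆ Iio b).Finite := by
  rw [Set.symmDiff_def, Iio_sdiff_Iio, Iio_sdiff_Iio]
  exact (finite_Ico b a).union (finite_Ico a b)

variable {e : α ≃ α} {L V W : Set α}

theorem finite_symmDiff_preimage_self (he : e ⁻¹' W = V) (hLV : (L ∆ V).Finite)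
    (hWL : (W ∆ L).Finite) : (L ∆ (e ⁻¹' L)).Finite := by
  refine (hLV.union ?_).subset (symmDiff_triangle L V _)
  rw [← he, ← preimage_symmDiff]
  exact hWL.preimage e.injective.injOn

theorem relIndex_preimage_self (he : e ⁻¹' W = V) (hLV : (L ∆ V).Finite)
    (hWL : (W ∆ L).Finite) : relIndex L (e ⁻¹' L) = relIndex L V + relIndex W L := by
  rw [← relIndex_preimage e W L, he]
  refine (relIndex_add hLV ?_).symm
  rw [← he, ← preimage_symmDiff]
  exact hWL.preimage e.injective.injOn

end RelIndex

section PiecewisePermutation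

variable {α : Type*} (π : α ≃ α) (L : Set α) [DecidablePred (· ∈ L)]

theorem injOn_piecewise_id : InjOn (L.piecewise id π) (π ⁻¹' L \ L)ᶜ := by
  intro i hi j hj hij
  simp only [mem_compl_iff, mem_sdiff, mem_preimage, not_and, not_not] at hi hj
  by_cases hiL : i ∈ L <;> by_cases hjL : j ∈ L <;>
    simp only [piecewise_eq_of_mem, piecewise_eq_of_notMem, hiL, hjL, id, not_false_eq_true] at hij
  · exact hij
  · exact absurd (hij ▸ hiL) (fun h => hjL (hj h))
  · exact absurd (hij ▸ hjL) (fun h => hiL (hi h))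
  · exact π.injective hij

theorem compl_image_piecewise_id :
    (L.piecewise id π '' (π ⁻¹' L \ L)ᶜ)ᶜ = π '' (L \ π ⁻¹' L) := by
  ext j
  constructor
  · intro hj
    have hjL : j ∉ L := fun h =>
      hj ⟨j, fun hD => hD.2 h, piecewise_eq_of_mem _ _ _ h⟩
    have hj' : π.symm j ∈ L := by
      by_contra h
      exact hj ⟨π.symm j, fun hD => hjL (by simpa using hD.1),
        by rw [piecewise_eq_of_notMem _ _ _ h, π.apply_symm_apply]⟩
    exact ⟨π.symm j, ⟨hj', by simpa using hjL⟩, π.apply_symm_apply j⟩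
  · rintro ⟨i, ⟨hiL, hπi⟩, rfl⟩ ⟨k, hk, hkj⟩
    by_cases hkL : k ∈ L
    · rw [piecewise_eq_of_mem _ _ _ hkL] at hkj
      exact hπi (by rwa [mem_preimage, ← hkj])
    · rw [piecewise_eq_of_notMem _ _ _ hkL, π.injective.eq_iff] at hkj
      exact hkL (hkj ▸ hiL)

end PiecewisePermutation

/-- **Theorem on splitting permutations.** If a (not necessarily banded)
permutation `π` of `ℤ` splits, i.e. `{ π(i) : i < i* } = { j : j < j* }`, then
`B = Q P Q + (I − Q)` is Fredholm with index `j* − i*`. -/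
theorem plus_index_of_split_permutation (π : ℤ ≃ ℤ) (istar jstar : ℤ)
    (hsplit : (fun i => π i) '' {i : ℤ | i < istar} = {j : ℤ | j < jstar})
    (P Q : H →L[ℂ] H)
    (hP : ∀ (x : H) (i : ℤ), P x i = x (π i))
    (hQ : ∀ (x : H) (i : ℤ), Q x i = if 1 ≤ i then x i else 0) :
    IsFredholm (Q ∘L P ∘L Q + (1 - Q)) ∧
    fredholmIndex (Q ∘L P ∘L Q + (1 - Q)) = jstar - istar := by
  set L : Set ℤ := Iio 1
  have hB : ∀ x : H, ⇑((Q ∘L P ∘L Q + (1 - Q)) x) =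
      (π ⁻¹' L \ L)ᶜ.indicator (x ∘ L.piecewise id π) := by
    intro x
    funext i
    simp only [add_apply, ContinuousLinearMap.coe_comp, comp_apply, sub_apply, one_apply_eq_self,
      lp.coeFn_add, lp.coeFn_sub, Pi.add_apply, Pi.sub_apply, hQ, hP, indicator, piecewise, L,
      mem_compl_iff, mem_sdiff, mem_preimage, mem_Iio, not_lt]
    split_ifs <;> first | omega | simp
  have hπ : π ⁻¹' Iio jstar = Iio istar := by
    rw [← preimage_image_eq (Iio istar) π.injective]
    exact congrArg _ hsplit.symm
  have hLV := finite_symmDiff_Iio (1 : ℤ) istar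
  have hWL := finite_symmDiff_Iio jstar 1
  have hL := finite_symmDiff_preimage_self hπ hLV hWL
  have hD : (π ⁻¹' L \ L).Finite := hL.subset subset_union_right
  have hK : (L.piecewise id π '' (π ⁻¹' L \ L)ᶜ)ᶜ.Finite := by
    rw [compl_image_piecewise_id]
    exact (hL.subset subset_union_left).image π
  refine ⟨isFredholm_of_eq_indicator_comp hB (injOn_piecewise_id π L) hD hK, ?_⟩
  rw [fredholmIndex_of_eq_indicator_comp hB (injOn_piecewise_id π L) hD hK,
    compl_image_piecewise_id, ncard_image_of_injective _ π.injective]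
  show relIndex L (π ⁻¹' L) = jstar - istar
  rw [relIndex_preimage_self hπ hLV hWL, relIndex_Iio, relIndex_Iio]
  ring
end
end

section
/- Let w ∈ ℕ, let π : ℤ → ℤ be a bijection with |π(i) − i| ≤ w for all i, let j* ∈ ℤ, and set n := #{ i ∈ ℤ : j* − w ≤ i ≤ j* + w − 1 and π(i) ≥ j* }. Then there exists a bijection π' : ℤ → ℤ such that: (a) π'(i) = π(i) for every i with i < j* − w or i ≥ j* + w; (b) π' is strictly increasing on the interval [j* − w, j* + w − 1]; and (c) { π'(i) : i < i* } = { j ∈ ℤ : j < j* } where i* := j* + w − n. In particular, π' differs from π in only finitely many places and splits at (i*, j*). -/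
/-!
Sort the values of `π` on the window `I = [j* - w, j* + w - 1]`: the rewired `π'` sends the
`k`-th point of `I` to the `k`-th smallest element of `π(I)` and agrees with `π` elsewhere.
By the bandwidth bound, `π i < j*` left of `I` and `π i ≥ j*` right of `I`. Since `π'(I) = π(I)`
contains exactly `n` values `≥ j*` and `π'` is increasing on `I`, these sit at the last `n`
positions of `I`. Hence `i < i* ↔ π' i < j*` for every `i`, which is the split.
-/

open Finset

namespace Equiv

variable {α : Type*} [LinearOrder α]

/-- On `s`, the `k`-th smallest element of `s` goes to the `k`-th smallest element of
`s.image π`. -/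
def sortOn (π : α ≃ α) (s : Finset α) : α ≃ α :=
  subtypeCongr
    ((s.orderIsoOfFin rfl).symm.toEquiv.trans
      ((s.image π).orderIsoOfFin (card_image_of_injective s π.injective)).toEquiv)
    (π.subtypeEquiv fun _ => π.injective.mem_finset_image.not.symm)

theorem sortOn_apply_of_notMem (π : α ≃ α) {s : Finset α} {x : α} (hx : x ∉ s) :
    π.sortOn s x = π x := by
  simp [sortOn, subtypeCongr, sumCompl_symm_apply_of_neg hx]

theorem sortOn_apply_of_mem (π : α ≃ α) {s : Finset α} {x : α} (hx : x ∈ s) :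
    π.sortOn s x = (s.image π).orderIsoOfFin (card_image_of_injective s π.injective)
      ((s.orderIsoOfFin rfl).symm ⟨x, hx⟩) := by
  simp [sortOn, subtypeCongr, sumCompl_symm_apply_of_pos hx]

theorem strictMonoOn_sortOn (π : α ≃ α) (s : Finset α) : StrictMonoOn (π.sortOn s) s := by
  intro x hx y hy hxy
  rw [sortOn_apply_of_mem π hx, sortOn_apply_of_mem π hy, Subtype.coe_lt_coe, OrderIso.lt_iff_lt,
    OrderIso.lt_iff_lt, Subtype.mk_lt_mk]
  exact hxy

theorem image_sortOn (π : α ≃ α) (s : Finset α) : s.image (π.sortOn s) = s.image π := by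
  refine eq_of_subset_of_card_le (fun y hy => ?_) ?_
  · obtain ⟨x, hx, rfl⟩ := mem_image.mp hy
    rw [sortOn_apply_of_mem π hx]
    exact Subtype.prop _
  · rw [card_image_of_injective _ π.injective,
      card_image_of_injective _ (π.sortOn s).injective]

theorem card_filter_sortOn (π : α ≃ α) (s : Finset α) (p : α → Prop) [DecidablePred p] :
    #{x ∈ s | p (π.sortOn s x)} = #{x ∈ s | p (π x)} := by
  rw [← card_image_of_injective _ (π.sortOn s).injective, ← filter_image,
    image_sortOn, filter_image, card_image_of_injective _ π.injective]

end Equiv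

theorem StrictMonoOn.lt_iff_lt_sub_card_filter_le {β : Type*} [LinearOrder β] {f : ℤ → β}
    {a b : ℤ} (hf : StrictMonoOn f (Set.Icc a b)) {i : ℤ} (hi : i ∈ Set.Icc a b) (d : β) :
    f i < d ↔ i < b + 1 - #{k ∈ Icc a b | d ≤ f k} := by
  constructor
  · intro hlt
    have hsub : {k ∈ Icc a b | d ≤ f k} ⊆ Ioc i b := fun k hk => by
      rw [mem_filter, mem_Icc] at hk
      refine mem_Ioc.mpr ⟨lt_of_not_ge fun hki => ?_, hk.1.2⟩
      exact (hk.2.trans (hf.monotoneOn hk.1 hi hki)).not_gt hlt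
    have hcard := card_le_card hsub
    rw [Int.card_Ioc] at hcard
    have hib := hi.2
    omega
  · intro hlt
    by_contra! hle
    have hsub : Icc i b ⊆ {k ∈ Icc a b | d ≤ f k} := fun k hk => by
      rw [mem_Icc] at hk
      have hk' : k ∈ Set.Icc a b := ⟨hi.1.trans hk.1, hk.2⟩
      exact mem_filter.mpr ⟨mem_Icc.mpr hk', hle.trans (hf.monotoneOn hi hk' hk.1)⟩
    have hcard := card_le_card hsub
    rw [Int.card_Icc] at hcard
    omega

theorem Equiv.image_Iio_eq_Iio_of_lt_iff {α β : Type*} [Preorder α] [Preorder β] (f : α ≃ β)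
    {a : α} {b : β} (h : ∀ x, x < a ↔ f x < b) : f '' Set.Iio a = Set.Iio b := by
  ext y
  simpa [Equiv.image_eq_preimage_symm] using h (f.symm y)

/-- **rewiring step.** For a banded permutation `π` (bandwidth `≤ w`) and
any `j* ∈ ℤ`, with `n = #{ i ∈ [j* − w, j* + w − 1] : π(i) ≥ j* }`, there is a
permutation `π'` of `ℤ` agreeing with `π` outside `[j* − w, j* + w − 1]`, strictly
increasing on that interval, which splits at `(i*, j*)` with `i* = j* + w − n`. -/
theorem rewiring_produces_split (w : ℕ) (π : ℤ ≃ ℤ)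
    (hband : ∀ i : ℤ, |π i - i| ≤ (w : ℤ)) (jstar : ℤ) (n : ℕ)
    (hn : n = ((Finset.Icc (jstar - w) (jstar + w - 1)).filter
        (fun i => jstar ≤ π i)).card) :
    ∃ π' : ℤ ≃ ℤ,
      (∀ i : ℤ, i < jstar - w ∨ jstar + w ≤ i → π' i = π i) ∧
      StrictMonoOn (fun i => π' i) (Set.Icc (jstar - w) (jstar + w - 1)) ∧
      (fun i => π' i) '' {i : ℤ | i < jstar + w - n} = {j : ℤ | j < jstar} := by
  set I := Icc (jstar - w) (jstar + w - 1)
  set π' := π.sortOn I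
  have hmono : StrictMonoOn π' (Set.Icc (jstar - w) (jstar + w - 1)) := by
    simpa [I] using π.strictMonoOn_sortOn I
  have houtside (i : ℤ) (hi : i < jstar - w ∨ jstar + w ≤ i) : π' i = π i :=
    π.sortOn_apply_of_notMem (by rw [mem_Icc]; omega)
  have hn' : n = #{k ∈ I | jstar ≤ π' k} := by rw [hn, π.card_filter_sortOn]
  have hn_le : n ≤ 2 * w := by
    have hcard := card_filter_le I (fun k => jstar ≤ π k)
    rw [Int.card_Icc] at hcard
    omega
  refine ⟨π', houtside, hmono, π'.image_Iio_eq_Iio_of_lt_iff fun i => ?_⟩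
  have hband_i := abs_le.mp (hband i)
  rcases lt_or_ge i (jstar - w) with hlo | hlo
  · rw [houtside i (.inl hlo)]
    omega
  rcases lt_or_ge (jstar + w - 1) i with hhi | hhi
  · rw [houtside i (.inr (by omega))]
    omega
  rw [hmono.lt_iff_lt_sub_card_filter_le ⟨hlo, hhi⟩, ← hn']
  omega
end

section
/- Let w ≥ 1 and let π : ℤ → ℤ be a bijection with |π(i) − i| ≤ w for all i which is centered, i.e. for every j* ∈ ℤ the number of integers i with j* − w ≤ i ≤ j* + w − 1 and π(i) ≥ j* equals w. Then there exist bijections β, γ : ℤ → ℤ with π = γ ∘ β such that β maps each block { 2wk, 2wk+1, …, 2wk + 2w − 1 } (k ∈ ℤ) onto itself, and γ maps each offset block { 2wk + w, 2wk + w + 1, …, 2wk + 3w − 1 } (k ∈ ℤ) onto itself. Equivalently, the centered banded permutation matrix factors as a product B·C of two block-diagonal permutation matrices with blocks of size 2w, the blocks of C offset by w from those of B. -/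
/-!
Cut `ℤ` into blocks `[2wk, 2wk + 2w - 1]` of length `2w`, each made of a lower and an upper half
of length `w`. Centeredness at `j* = 2wk + w` says that exactly `w` elements of the `k`-th block
are sent by `π` to values `≥ 2wk + w`, so some permutation `β` of each block carries these onto the
upper half and the others onto the lower half. Then `γ = π ∘ β⁻¹` sends the upper half of block `k`
and the lower half of block `k + 1` into `[2wk + w, 2wk + 3w - 1]`: one bound comes from the choice
of `β`, the other from the bandwidth. So `γ` maps each offset block into, hence onto, itself.
-/

open Set

theorem Equiv.Perm.exists_forall_iff_of_card_eq {α : Type*} [Finite α] {p r : α → Prop}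
    (h : Nat.card {x // p x} = Nat.card {x // r x}) :
    ∃ σ : Equiv.Perm α, ∀ x, r (σ x) ↔ p x := by
  classical
  cases nonempty_fintype α
  simp only [Nat.card_eq_fintype_card] at h
  obtain ⟨e⟩ := Fintype.card_eq.mp h
  obtain ⟨f⟩ := Fintype.card_eq.mp (Fintype.card_compl_eq_card_compl p r h)
  refine ⟨Equiv.subtypeCongr e f, fun x => ?_⟩
  by_cases hx : p x
  · simpa [Equiv.subtypeCongr, hx] using (e ⟨x, hx⟩).2
  · simpa [Equiv.subtypeCongr, hx] using (f ⟨x, hx⟩).2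

theorem Equiv.Perm.exists_fiberwise_forall_iff {α ι : Type*} (q : α → ι) {p r : α → Prop}
    (hfin : ∀ k, {x | q x = k}.Finite)
    (hcard : ∀ k, {x | q x = k ∧ p x}.ncard = {x | q x = k ∧ r x}.ncard) :
    ∃ β : Equiv.Perm α, (∀ x, q (β x) = q x) ∧ ∀ x, r (β x) ↔ p x := by
  have hfiber : ∀ k, ∃ σ : Equiv.Perm {x // q x = k}, ∀ y, r (σ y) ↔ p y := fun k => by
    have : Finite {x // q x = k} := (hfin k).to_subtype
    refine exists_forall_iff_of_card_eq (α := {x // q x = k})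
      (p := fun y => p y) (r := fun y => r y) ?_
    rw [Nat.card_congr (Equiv.subtypeSubtypeEquivSubtypeInter _ p),
      Nat.card_congr (Equiv.subtypeSubtypeEquivSubtypeInter _ r)]
    exact hcard k
  choose σ hσ using hfiber
  exact ⟨Equiv.ofFiberEquiv σ, Equiv.ofFiberEquiv_map σ, fun x => hσ _ _⟩

theorem Equiv.Perm.image_preimage_eq_of_forall_eq {α ι : Type*} {q : α → ι}
    (β : Equiv.Perm α) (h : ∀ x, q (β x) = q x) (s : Set ι) : β '' (q ⁻¹' s) = q ⁻¹' s := by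
  ext x
  rw [Equiv.image_eq_preimage_symm, mem_preimage, mem_preimage, mem_preimage, ← h (β.symm x),
    Equiv.apply_symm_apply]

theorem Equiv.Perm.image_eq_of_mapsTo {α : Type*} {s : Set α} (hs : s.Finite)
    (σ : Equiv.Perm α) (h : MapsTo σ s s) : σ '' s = s :=
  ((hs.injOn_iff_bijOn_of_mapsTo h).mp σ.injective.injOn).image_eq

theorem Finset.Icc_filter_le_of_le_left {α : Type*} [Preorder α] [LocallyFiniteOrder α]
    {a b c : α} [DecidablePred (c ≤ ·)] (h : a ≤ c) :
    (Finset.Icc a b).filter (c ≤ ·) = Finset.Icc c b := by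
  ext x
  simp only [Finset.mem_filter, Finset.mem_Icc]
  exact ⟨fun hx => ⟨hx.2, hx.1.2⟩, fun hx => ⟨⟨h.trans hx.1, hx.2⟩, hx.1⟩⟩

theorem Int.ediv_eq_iff_mem_Icc {N : ℤ} (hN : 0 < N) {i k : ℤ} :
    i / N = k ↔ i ∈ Icc (N * k) (N * k + N - 1) := by
  rw [Int.ediv_eq_iff_of_pos hN, mem_Icc, mul_comm k]
  omega

theorem Int.setOf_ediv_eq {N : ℤ} (hN : 0 < N) (k : ℤ) :
    {i | i / N = k} = Icc (N * k) (N * k + N - 1) :=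
  Set.ext fun _ => Int.ediv_eq_iff_mem_Icc hN

theorem Int.ncard_setOf_ediv_eq_and_add_le {N : ℤ} (hN : 0 < N) (f : ℤ → ℤ) (c k : ℤ) :
    {x | x / N = k ∧ N * (x / N) + c ≤ f x}.ncard =
      ((Finset.Icc (N * k) (N * k + N - 1)).filter fun i => N * k + c ≤ f i).card := by
  rw [← Set.ncard_coe_finset, Finset.coe_filter]
  congr 1
  ext x
  simp only [mem_ofPred_eq, Finset.mem_Icc, ← mem_Icc, ← Int.ediv_eq_iff_mem_Icc hN]
  exact and_congr_right fun hx => by rw [hx]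

theorem mapsTo_offset_block {w : ℤ} (hw : 0 < w) {π β : Equiv.Perm ℤ}
    (hband : ∀ i, |π i - i| ≤ w) (hβq : ∀ i, β i / (2 * w) = i / (2 * w))
    (hβ : ∀ i, 2 * w * (β i / (2 * w)) + w ≤ β i ↔ 2 * w * (i / (2 * w)) + w ≤ π i) (k : ℤ) :
    MapsTo (β.symm.trans π) (Icc (2 * w * k + w) (2 * w * k + 3 * w - 1))
      (Icc (2 * w * k + w) (2 * w * k + 3 * w - 1)) := by
  intro x ⟨hxk, hxk'⟩
  obtain ⟨i, rfl⟩ := β.surjective x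
  have hN : 0 < 2 * w := by omega
  have hπ := abs_le.mp (hband i)
  simp only [Equiv.trans_apply, Equiv.symm_apply_apply, mem_Icc]
  rcases lt_or_ge (β i) (2 * w * k + 2 * w) with hlt | hge
  · have hk : β i / (2 * w) = k := (Int.ediv_eq_iff_mem_Icc hN).mpr ⟨by linarith, by linarith⟩
    have hik := (hβq i).symm.trans hk
    have hup := (hβ i).mp (by rw [hk]; linarith)
    rw [hik] at hup
    have hi := (Int.ediv_eq_iff_mem_Icc hN).mp hik
    constructor <;> linarith [hi.2]
  · have hk : β i / (2 * w) = k + 1 :=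
      (Int.ediv_eq_iff_mem_Icc hN).mpr ⟨by linarith, by linarith⟩
    have hik := (hβq i).symm.trans hk
    have hlow := mt (hβ i).mpr (by rw [hk]; linarith)
    rw [hik] at hlow
    have hi := (Int.ediv_eq_iff_mem_Icc hN).mp hik
    constructor <;> linarith [hi.1]

/-- **Theorem 2.** A centered permutation of `ℤ` with bandwidth `w ≥ 1`
factors as `π = γ ∘ β`, where `β` preserves each block `[2wk, 2wk + 2w − 1]` and `γ`
preserves each offset block `[2wk + w, 2wk + 3w − 1]`. -/
theorem centered_factors_into_blocks (w : ℕ) (hw : 1 ≤ w) (π : ℤ ≃ ℤ)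
    (hband : ∀ i : ℤ, |π i - i| ≤ (w : ℤ))
    (hcentered : ∀ jstar : ℤ,
      ((Finset.Icc (jstar - w) (jstar + w - 1)).filter
        (fun i => jstar ≤ π i)).card = w) :
    ∃ β γ : ℤ ≃ ℤ,
      (∀ i : ℤ, π i = γ (β i)) ∧
      (∀ k : ℤ, (fun i => β i) '' Set.Icc (2 * w * k) (2 * w * k + 2 * w - 1) =
        Set.Icc (2 * w * k) (2 * w * k + 2 * w - 1)) ∧
      (∀ k : ℤ, (fun i => γ i) '' Set.Icc (2 * w * k + w) (2 * w * k + 3 * w - 1) =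
        Set.Icc (2 * w * k + w) (2 * w * k + 3 * w - 1)) := by
  have hw' : (0 : ℤ) < w := by omega
  have hN : (0 : ℤ) < 2 * w := by omega
  have hcard : ∀ k : ℤ, {x | x / (2 * w) = k ∧ 2 * w * (x / (2 * w)) + w ≤ π x}.ncard =
      {x | x / (2 * w) = k ∧ 2 * w * (x / (2 * w)) + w ≤ x}.ncard := fun k => by
    have hupper : ((Finset.Icc (2 * w * k) (2 * w * k + 2 * w - 1)).filter
        fun i => 2 * w * k + w ≤ π i).card = w := by
      convert hcentered (2 * w * k + w) using 3
      congr 1 <;> ring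
    rw [Int.ncard_setOf_ediv_eq_and_add_le hN, Int.ncard_setOf_ediv_eq_and_add_le hN fun x => x,
      hupper, Finset.Icc_filter_le_of_le_left (by omega), Int.card_Icc]
    omega
  obtain ⟨β, hβq, hβ⟩ := Equiv.Perm.exists_fiberwise_forall_iff (· / (2 * (w : ℤ)))
    (fun k => Int.setOf_ediv_eq hN k ▸ finite_Icc _ _) hcard
  refine ⟨β, β.symm.trans π, fun i => by simp, fun k => ?_, fun k => ?_⟩
  · rw [← Int.setOf_ediv_eq hN]
    exact β.image_preimage_eq_of_forall_eq hβq {k}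
  · exact Equiv.Perm.image_eq_of_mapsTo (finite_Icc _ _) (β.symm.trans π)
      (mapsTo_offset_block hw' hband hβq hβ k)
end

section
/- Let π : ℤ → ℤ be a bijection with |π(i) − i| ≤ 1 for all i ∈ ℤ. If π is neither the map i ↦ i − 1 nor the map i ↦ i + 1, then π is centered: for every j ∈ ℤ, exactly one of the two integers i ∈ { j − 1, j } satisfies π(i) ≥ j. (Thus the only tridiagonal biinfinite permutation matrices with nonzero plus-index are the forward and backward shifts.) -/
/-!
If two consecutive values of a bandwidth-one permutation both move up, `π (j - 1) = j` and
`π j = j + 1`, then injectivity forces `π (j + 1) = j + 2` and surjectivity forces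
`π (j - 2) = j - 1`, so the pattern propagates and `π` is the forward shift. If neither
`j - 1` nor `j` is sent to `[j, ∞)`, the same happens for `π⁻¹`, and `π` is the backward shift.
-/

def BandwidthLE (π : ℤ ≃ ℤ) (w : ℕ) : Prop :=
  ∀ i, |π i - i| ≤ w

def ShiftAt (π : ℤ ≃ ℤ) (j : ℤ) : Prop :=
  π (j - 1) = j ∧ π j = j + 1

namespace BandwidthLE

variable {π : ℤ ≃ ℤ}

theorem symm {w : ℕ} (h : BandwidthLE π w) : BandwidthLE π.symm w := fun i => by
  simpa [abs_sub_comm] using h (π.symm i)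

theorem shiftAt_add_one (h : BandwidthLE π 1) {j : ℤ} (hj : ShiftAt π j) :
    ShiftAt π (j + 1) := by
  obtain ⟨hl, hr⟩ := hj
  have hb := abs_le.mp (h (j + 1))
  have hne₁ : π (j + 1) ≠ π (j - 1) := π.injective.ne (by omega)
  have hne₂ : π (j + 1) ≠ π j := π.injective.ne (by omega)
  refine ⟨by simpa using hr, ?_⟩
  push_cast at hb
  omega

theorem shiftAt_sub_one (h : BandwidthLE π 1) {j : ℤ} (hj : ShiftAt π j) :
    ShiftAt π (j - 1) := by
  obtain ⟨hl, hr⟩ := hj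
  obtain ⟨k, hk⟩ := π.surjective (j - 1)
  have hb := abs_le.mp (h k)
  have hk₁ : k ≠ j - 1 := fun h => by rw [h, hl] at hk; omega
  have hk₂ : k ≠ j := fun h => by rw [h, hr] at hk; omega
  rw [hk] at hb
  push_cast at hb
  refine ⟨?_, by simpa using hl⟩
  rw [show j - 1 - 1 = k by omega, hk]

theorem eq_add_one_of_shiftAt (h : BandwidthLE π 1) {j : ℤ} (hj : ShiftAt π j) (i : ℤ) :
    π i = i + 1 :=
  (Int.inductionOn' (motive := ShiftAt π) i j hj
    (fun _ _ => h.shiftAt_add_one) (fun _ _ => h.shiftAt_sub_one)).2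

theorem shiftAt_of_le (h : BandwidthLE π 1) {j : ℤ} (hl : j ≤ π (j - 1)) (hr : j ≤ π j) :
    ShiftAt π j := by
  have hbl := abs_le.mp (h (j - 1))
  have hbr := abs_le.mp (h j)
  push_cast at hbl hbr
  have hne : π j ≠ π (j - 1) := π.injective.ne (by omega)
  constructor <;> omega

theorem shiftAt_symm_of_lt (h : BandwidthLE π 1) {j : ℤ} (hl : π (j - 1) < j)
    (hr : π j < j) : ShiftAt π.symm (j - 1) := by
  have hbl := abs_le.mp (h (j - 1))
  have hbr := abs_le.mp (h j)
  push_cast at hbl hbr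
  have hne : π (j - 1) ≠ π j := π.injective.ne (by omega)
  constructor
  · rw [Equiv.symm_apply_eq]; omega
  · rw [Equiv.symm_apply_eq, sub_add_cancel]; omega

end BandwidthLE

/-- A permutation `π` of `ℤ` with bandwidth at most `1` that is neither
the backward shift `i ↦ i − 1` nor the forward shift `i ↦ i + 1` is centered: for every
`j ∈ ℤ`, exactly one of the two integers `i ∈ {j − 1, j}` satisfies `π(i) ≥ j`. -/
theorem tridiagonal_permutation_centered (π : ℤ ≃ ℤ)
    (hband : ∀ i : ℤ, |π i - i| ≤ 1)
    (hne₁ : ¬ ∀ i : ℤ, π i = i - 1)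
    (hne₂ : ¬ ∀ i : ℤ, π i = i + 1) :
    ∀ j : ℤ, Xor' (j ≤ π (j - 1)) (j ≤ π j) := by
  have hπ : BandwidthLE π 1 := by exact_mod_cast hband
  intro j
  by_cases hl : j ≤ π (j - 1) <;> by_cases hr : j ≤ π j
  · exact absurd (hπ.eq_add_one_of_shiftAt (hπ.shiftAt_of_le hl hr)) hne₂
  · exact Or.inl ⟨hl, hr⟩
  · exact Or.inr ⟨hr, hl⟩
  · refine absurd (fun i => ?_) hne₁
    have hi := hπ.symm.eq_add_one_of_shiftAt
      (hπ.shiftAt_symm_of_lt (not_le.mp hl) (not_le.mp hr)) (π i)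
    rw [π.symm_apply_apply] at hi
    omega
end

section
/- (Asplund's theorem.) Let A be an invertible n × n real matrix and let p, k be integers with p ≥ 0 and k ≥ 1. Then the following are equivalent: (i) for all subsets I, J of the index set {1, …, n} such that j − i > p for every i ∈ I and j ∈ J, the submatrix (a_{ij})_{i∈I, j∈J} has rank < k; (ii) for all subsets I, J of {1, …, n} such that j > i − p for every i ∈ I and j ∈ J, the submatrix ((A⁻¹)_{ij})_{i∈I, j∈J} has rank < p + k. -/
/-!
Write `V_S` for the vectors vanishing outside `S`. The rank of a block `M[R, C]` is
`dim M V_C - dim (M V_C ⊓ V_{Rᶜ})`, and an invertible `A` maps `A⁻¹ V_C ⊓ V_{Rᶜ}` onto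
`V_C ⊓ A V_{Rᶜ}`; this is the nullity theorem `rank A⁻¹[R, C] + |Rᶜ| = rank A[Cᶜ, Rᶜ] + |C|`.
For `R = {i < c + p}` and `C = {j ≥ c}` it compares a corner block of `A⁻¹` reaching `p` below the
diagonal with the corner block `A[{i < c}, {j ≥ c + p}]` above the `p`-th superdiagonal: the
first rank exceeds the second by at most `p`, and by exactly `p` when `c + p ≤ n`. Every
submatrix in (i) or (ii) lies in such a corner block.
-/

open Matrix Module Finset

theorem Submodule.finrank_map_add_finrank_inf_ker {K V W : Type*} [Field K] [AddCommGroup V]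
    [Module K V] [AddCommGroup W] [Module K W] [FiniteDimensional K V]
    (f : V →ₗ[K] W) (X : Submodule K V) :
    finrank K (X.map f) + finrank K ↥(X ⊓ LinearMap.ker f) = finrank K X := by
  rw [← LinearMap.range_domRestrict, ← Submodule.map_comap_subtype,
    Submodule.finrank_map_subtype_eq, ← LinearMap.ker_domRestrict]
  exact LinearMap.finrank_range_add_finrank_ker _

theorem LinearEquiv.finrank_map_symm_inf {K V W : Type*} [Field K] [AddCommGroup V]
    [Module K V] [AddCommGroup W] [Module K W] (e : V ≃ₗ[K] W) (X : Submodule K W)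
    (Y : Submodule K V) :
    finrank K ↥(X.map (e.symm : W →ₗ[K] V) ⊓ Y) = finrank K ↥(X ⊓ Y.map (e : V →ₗ[K] W)) := by
  rw [← e.finrank_map_eq, Submodule.map_inf _ e.injective,
    (Submodule.map_symm_eq_iff e (K := X)).mp rfl]

section VanishingOutside

variable (K : Type*) [Field K] {n : Type*} [Fintype n] [DecidableEq n]

def vanishingOutside (S : Finset n) : Submodule K (n → K) :=
  LinearMap.ker (LinearMap.funLeft K K ((↑) : ↥Sᶜ → n))

theorem ker_funLeft_coe (S : Finset n) :
    LinearMap.ker (LinearMap.funLeft K K ((↑) : S → n)) = vanishingOutside K Sᶜ := by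
  rw [vanishingOutside, compl_compl]

theorem finrank_vanishingOutside (S : Finset n) : finrank K (vanishingOutside K S) = #S := by
  have h := LinearMap.finrank_range_add_finrank_ker (LinearMap.funLeft K K ((↑) : ↥Sᶜ → n))
  rw [LinearMap.range_eq_top.mpr (LinearMap.funLeft_surjective_of_injective _ _ _
    Subtype.val_injective), finrank_top, finrank_fintype_fun_eq_card,
    finrank_fintype_fun_eq_card, Fintype.card_coe, card_compl] at h
  have := card_le_univ S
  rw [vanishingOutside]
  omega

end VanishingOutside

def Fin.below (n r : ℕ) : Finset (Fin n) := {i | (i : ℕ) < r}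

@[simp]
theorem Fin.mem_below {n r : ℕ} {i : Fin n} : i ∈ Fin.below n r ↔ (i : ℕ) < r := by
  simp [Fin.below]

theorem Fin.card_below (n r : ℕ) : #(Fin.below n r) = min n r :=
  Fin.card_filter_val_lt

namespace Matrix

variable {K : Type*} [Field K]

theorem one_submatrix_mulVec_apply {n : Type*} [DecidableEq n] (S : Finset n) (y : S → K)
    (i : n) :
    ((1 : Matrix n n K).submatrix id ((↑) : S → n) *ᵥ y) i = if h : i ∈ S then y ⟨i, h⟩ else 0 := by
  simp only [mulVec, dotProduct, submatrix_apply, id, one_apply, ite_mul, one_mul, zero_mul]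
  split_ifs with h
  · rw [Fintype.sum_eq_single ⟨i, h⟩ fun j hj => if_neg fun hij => hj (Subtype.ext hij.symm),
      if_pos rfl]
  · exact Finset.sum_eq_zero fun j _ => if_neg fun (hij : i = j) => h (hij ▸ j.2)

variable (K) in
theorem range_mulVecLin_one_submatrix {n : Type*} [Fintype n] [DecidableEq n] (S : Finset n) :
    LinearMap.range ((1 : Matrix n n K).submatrix id ((↑) : S → n)).mulVecLin =
      vanishingOutside K S := by
  ext x
  constructor
  · rintro ⟨y, rfl⟩
    ext ⟨i, hi⟩
    exact (one_submatrix_mulVec_apply S y i).trans (dif_neg (mem_compl.mp hi))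
  · intro hx
    refine ⟨LinearMap.funLeft K K (↑) x, funext fun i => ?_⟩
    rw [mulVecLin_apply, one_submatrix_mulVec_apply]
    split_ifs with hi
    · rfl
    · exact (congrFun hx ⟨i, mem_compl.mpr hi⟩).symm

theorem range_mulVecLin_submatrix {l m n : Type*} [Fintype n] [DecidableEq n] (M : Matrix m n K)
    (r : l → m) (C : Finset n) :
    LinearMap.range (M.submatrix r ((↑) : C → n)).mulVecLin =
      ((vanishingOutside K C).map M.mulVecLin).map (LinearMap.funLeft K K r) := by
  have hM : M.submatrix r (↑) =
      M.submatrix r id * (1 : Matrix n n K).submatrix id ((↑) : C → n) := by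
    rw [← submatrix_mul _ _ _ _ _ Function.bijective_id, Matrix.mul_one]
  have hrow : (M.submatrix r id).mulVecLin = LinearMap.funLeft K K r ∘ₗ M.mulVecLin := rfl
  rw [hM, mulVecLin_mul, hrow, LinearMap.range_comp, range_mulVecLin_one_submatrix,
    Submodule.map_comp]

theorem rank_submatrix_add_finrank_inf {m n : Type*} [Fintype m] [DecidableEq m] [Fintype n]
    [DecidableEq n] (M : Matrix m n K) (R : Finset m) (C : Finset n) :
    (M.submatrix ((↑) : R → m) ((↑) : C → n)).rank
      + finrank K ↥((vanishingOutside K C).map M.mulVecLin ⊓ vanishingOutside K Rᶜ)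
      = finrank K ((vanishingOutside K C).map M.mulVecLin) := by
  rw [rank, range_mulVecLin_submatrix, ← ker_funLeft_coe]
  exact Submodule.finrank_map_add_finrank_inf_ker _ _

theorem rank_inv_submatrix_add_card_compl {n : Type*} [Fintype n] [DecidableEq n]
    (A : Matrix n n K) (hA : IsUnit A) (R C : Finset n) :
    (A⁻¹.submatrix ((↑) : R → n) ((↑) : C → n)).rank + #Rᶜ
      = (A.submatrix ((↑) : ↥Cᶜ → n) ((↑) : ↥Rᶜ → n)).rank + #C := by
  have hdet := (isUnit_iff_isUnit_det A).mp hA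
  let e : (n → K) ≃ₗ[K] (n → K) := LinearEquiv.ofLinearMap A.mulVecLin A⁻¹.mulVecLin
    (by rw [← mulVecLin_mul, mul_nonsing_inv _ hdet, mulVecLin_one])
    (by rw [← mulVecLin_mul, nonsing_inv_mul _ hdet, mulVecLin_one])
  have hB := rank_submatrix_add_finrank_inf A⁻¹ R C
  have hA' := rank_submatrix_add_finrank_inf A Cᶜ Rᶜ
  rw [show A⁻¹.mulVecLin = e.symm from rfl, e.symm.finrank_map_eq, finrank_vanishingOutside,
    e.finrank_map_symm_inf] at hB
  rw [show A.mulVecLin = e from rfl, e.finrank_map_eq, finrank_vanishingOutside, compl_compl,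
    inf_comm] at hA'
  omega

theorem rank_submatrix_mono {α m n : Type*} [CommSemiring α] [StrongRankCondition α]
    (M : Matrix m n α) {I I' : Finset m} {J J' : Finset n} (hI : I ⊆ I') (hJ : J ⊆ J') :
    (M.submatrix ((↑) : I → m) ((↑) : J → n)).rank
      ≤ (M.submatrix ((↑) : I' → m) ((↑) : J' → n)).rank := by
  have h := rank_submatrix_le (M.submatrix ((↑) : I' → m) ((↑) : J' → n))
    (fun i : I => (⟨i, hI i.2⟩ : I')) (fun j : J => (⟨j, hJ j.2⟩ : J'))
  rwa [submatrix_submatrix] at h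

theorem rank_inv_submatrix_below_add {n : ℕ} (A : Matrix (Fin n) (Fin n) K) (hA : IsUnit A)
    (c p : ℕ) :
    (A⁻¹.submatrix ((↑) : Fin.below n (c + p) → Fin n) ((↑) : ↥(Fin.below n c)ᶜ → Fin n)).rank
        + (n - min n (c + p))
      = (A.submatrix ((↑) : Fin.below n c → Fin n) ((↑) : ↥(Fin.below n (c + p))ᶜ → Fin n)).rank
        + (n - min n c) := by
  have h := rank_inv_submatrix_add_card_compl A hA (Fin.below n (c + p)) (Fin.below n c)ᶜ
  rwa [compl_compl, card_compl, card_compl, Fintype.card_fin, Fin.card_below,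
    Fin.card_below] at h

theorem rank_inv_submatrix_lt_add_of_rank_submatrix_lt {n : ℕ} {A : Matrix (Fin n) (Fin n) K}
    (hA : IsUnit A) {p k : ℕ}
    (h : ∀ I J : Finset (Fin n), (∀ i ∈ I, ∀ j ∈ J, (i : ℕ) + p < j) →
      (A.submatrix ((↑) : I → Fin n) ((↑) : J → Fin n)).rank < k)
    {I J : Finset (Fin n)} (hIJ : ∀ i ∈ I, ∀ j ∈ J, (i : ℕ) < j + p) :
    (A⁻¹.submatrix ((↑) : I → Fin n) ((↑) : J → Fin n)).rank < p + k := by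
  obtain ⟨c, hIc, hJc⟩ : ∃ c : ℕ, (∀ i ∈ I, (i : ℕ) < c + p) ∧ ∀ j ∈ J, c ≤ (j : ℕ) := by
    rcases J.eq_empty_or_nonempty with rfl | hJ
    · exact ⟨n, fun i _ => by omega, by simp⟩
    · exact ⟨J.min' hJ, fun i hi => hIJ i hi _ (J.min'_mem hJ), fun j hj => J.min'_le j hj⟩
  have hsub := rank_submatrix_mono A⁻¹ (I' := Fin.below n (c + p)) (J' := (Fin.below n c)ᶜ)
    (fun i hi => by simpa using hIc i hi) (fun j hj => by simpa using hJc j hj)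
  have hcorner := h (Fin.below n c) (Fin.below n (c + p))ᶜ
    (fun i hi j hj => by simp only [mem_compl, Fin.mem_below] at hi hj; omega)
  have := rank_inv_submatrix_below_add A hA c p
  omega

theorem rank_submatrix_lt_of_rank_inv_submatrix_lt_add {n : ℕ} {A : Matrix (Fin n) (Fin n) K}
    (hA : IsUnit A) {p k : ℕ} (hk : 1 ≤ k)
    (h : ∀ I J : Finset (Fin n), (∀ i ∈ I, ∀ j ∈ J, (i : ℕ) < j + p) →
      (A⁻¹.submatrix ((↑) : I → Fin n) ((↑) : J → Fin n)).rank < p + k)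
    {I J : Finset (Fin n)} (hIJ : ∀ i ∈ I, ∀ j ∈ J, (i : ℕ) + p < j) :
    (A.submatrix ((↑) : I → Fin n) ((↑) : J → Fin n)).rank < k := by
  rcases I.eq_empty_or_nonempty with rfl | hI
  · exact (rank_le_card_height _).trans_lt (by simp; omega)
  rcases J.eq_empty_or_nonempty with rfl | hJ
  · exact (rank_le_card_width _).trans_lt (by simp; omega)
  set c := (I.max' hI : ℕ) + 1
  have hcn : c + p ≤ n := by
    have := hIJ _ (I.max'_mem hI) _ (J.min'_mem hJ)
    have := (J.min' hJ).isLt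
    omega
  have hsub := rank_submatrix_mono A (I' := Fin.below n c) (J' := (Fin.below n (c + p))ᶜ)
    (fun i hi => Fin.mem_below.mpr (Nat.lt_succ_of_le (I.le_max' i hi)))
    (fun j hj => by
      have := hIJ _ (I.max'_mem hI) j hj
      simp only [mem_compl, Fin.mem_below]
      omega)
  have hcorner := h (Fin.below n (c + p)) (Fin.below n c)ᶜ
    (fun i hi j hj => by simp only [mem_compl, Fin.mem_below] at hi hj; omega)
  have := rank_inv_submatrix_below_add A hA c p
  omega

end Matrix

/-- **Asplund's theorem.** For an invertible `n × n` real matrix `A` and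
integers `p ≥ 0`, `k ≥ 1`: all submatrices of `A` above the `p`-th superdiagonal have
rank `< k` iff all submatrices of `A⁻¹` above the `p`-th subdiagonal have rank `< p + k`. -/
theorem asplund (n : ℕ) (A : Matrix (Fin n) (Fin n) ℝ) (hA : IsUnit A)
    (p k : ℕ) (hk : 1 ≤ k) :
    (∀ I J : Finset (Fin n), (∀ i ∈ I, ∀ j ∈ J, (i : ℕ) + p < (j : ℕ)) →
      (A.submatrix (fun a : I => (a : Fin n)) (fun b : J => (b : Fin n))).rank < k) ↔
    (∀ I J : Finset (Fin n), (∀ i ∈ I, ∀ j ∈ J, (i : ℕ) < (j : ℕ) + p) →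
      ((A⁻¹).submatrix (fun a : I => (a : Fin n)) (fun b : J => (b : Fin n))).rank
        < p + k) :=
  ⟨fun h _ _ hIJ => rank_inv_submatrix_lt_add_of_rank_submatrix_lt hA h hIJ,
    fun h _ _ hIJ => rank_submatrix_lt_of_rank_inv_submatrix_lt_add hA hk h hIJ⟩
end
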